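/- arXiv:1307.6442 — 6 statements merged into one kernel-verified Lean document; each statement's English description precedes it below -/
import Mathlib

section
/- The Fisher information of λ at λ = 0 for the skew-symmetric model s(y;λ)=2 f(y) G(λ y) equals 4 g(0)² ∫_ℝ y² f(y) dy; consequently I(0) is finite if and only if f has a finite second moment. -/
/-! Since `G 0 = 1/2`, the integrand of `I 0` is `2 g(0)² y² f(y)`, so `I 0` is the second moment
of `f` times the positive finite constant `4 g(0)²`. -/

open MeasureTheory Set
open scoped ENNReal

theorem ENNReal.ofReal_mul_lt_top_iff {c : ℝ} (hc : 0 < c) {a : ℝ≥0∞} :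
    ENNReal.ofReal c * a < ⊤ ↔ a < ⊤ :=
  ⟨fun h ↦ ENNReal.lt_top_of_mul_ne_top_right h.ne (ENNReal.ofReal_pos.2 hc).ne',
    ENNReal.mul_lt_top ENNReal.ofReal_lt_top⟩

theorem MeasureTheory.lintegral_ofReal_mul_const {α : Type*} [MeasurableSpace α] (μ : Measure α)
    (h : α → ℝ) {c : ℝ} (hc : 0 ≤ c) :
    ∫⁻ x, ENNReal.ofReal (h x * c) ∂μ = ENNReal.ofReal c * ∫⁻ x, ENNReal.ofReal (h x) ∂μ := by
  simp_rw [mul_comm _ c, ENNReal.ofReal_mul hc]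
  exact lintegral_const_mul' _ _ ENNReal.ofReal_ne_top

theorem fisher_information_at_zero_general
    (f g G : ℝ → ℝ) (I : ℝ → ℝ≥0∞)
    (hg_pos : ∀ x, 0 < g x)
    (hG0 : G 0 = 1/2)
    (hI : ∀ lam, I lam
      = 2 * ∫⁻ y, ENNReal.ofReal (y^2 * f y * (g (lam * y))^2 / G (lam * y))) :
    I 0 = ENNReal.ofReal (4 * (g 0)^2) * ∫⁻ y, ENNReal.ofReal (y^2 * f y)
      ∧ (I 0 < ⊤ ↔ (∫⁻ y, ENNReal.ofReal (y^2 * f y)) < ⊤) := by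
  have hI0 : I 0 = ENNReal.ofReal (4 * (g 0)^2) * ∫⁻ y, ENNReal.ofReal (y^2 * f y) := by
    have hintegrand : ∀ y : ℝ, y^2 * f y * (g (0 * y))^2 / G (0 * y) = y^2 * f y * (2 * (g 0)^2) := by
      intro y
      rw [zero_mul, hG0]
      ring
    rw [hI 0]
    simp_rw [hintegrand]
    rw [lintegral_ofReal_mul_const _ _ (by positivity), ← mul_assoc, ← ENNReal.ofReal_ofNat,
      ← ENNReal.ofReal_mul (by norm_num)]
    ring_nf
  exact ⟨hI0, hI0 ▸ ENNReal.ofReal_mul_lt_top_iff (by have := hg_pos 0; positivity)⟩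

/-- I(0) = 4 g(0)² ∫ y² f(y) dy, hence I(0) is finite iff f has a
finite second moment. -/
theorem fisher_information_at_zero
    (f g G : ℝ → ℝ) (I : ℝ → ℝ≥0∞)
    (hf_cont : Continuous f) (hf_symm : ∀ x, f (-x) = f x)
    (hf_pos : ∀ x, 0 < f x) (hf_int : ∫ x, f x = 1)
    (hg_cont : Continuous g) (hg_symm : ∀ x, g (-x) = g x)
    (hg_pos : ∀ x, 0 < g x) (hg_int : ∫ x, g x = 1)
    (hG : ∀ t, G t = ∫ u in Iic t, g u) (hG0 : G 0 = 1/2)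
    (hI : ∀ lam, I lam
      = 2 * ∫⁻ y, ENNReal.ofReal (y^2 * f y * (g (lam * y))^2 / G (lam * y))) :
    I 0 = ENNReal.ofReal (4 * (g 0)^2) * ∫⁻ y, ENNReal.ofReal (y^2 * f y)
      ∧ (I 0 < ⊤ ↔ (∫⁻ y, ENNReal.ofReal (y^2 * f y)) < ⊤) :=
  fisher_information_at_zero_general f g G I hg_pos hG0 hI
end

section
/- Assume f is symmetric, unimodal, bounded by M, and that C := ∫_0^∞ u² g(u)²/(G(u)(1-G(u))) du is finite and positive. Then λ³ I(λ) is bounded between two positive constants as λ → ∞; i.e., I(λ) = Θ(λ^{-3}) and hence √I(λ) = Θ(λ^{-3/2}). -/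
/-!
Substituting `u = λy` gives `λ³ I(λ) = 2 ∫₀^∞ f(u/λ) u² h(u) du` with `h = g²/(G(1-G))`.
Since `f ≤ M`, this is at most `2MC`. Since `f` is nonincreasing on `[0,∞)`, `f(u/λ) ≥ f(1)` for
`0 < u ≤ R ≤ λ`, so it is at least `2 f(1) ∫₀^R u² h(u) du`, which is positive for some `R`
because `C > 0`.
-/

open MeasureTheory Set
open scoped ENNReal

lemma lintegral_Ioi_comp_mul_left {a : ℝ} (ha : 0 < a) (F : ℝ → ℝ≥0∞) :
    ∫⁻ y in Ioi 0, F (a * y) = ENNReal.ofReal a⁻¹ * ∫⁻ u in Ioi 0, F u := by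
  have hemb := measurableEmbedding_mulLeft₀ ha.ne'
  rw [← abs_of_pos (inv_pos.2 ha), ← smul_eq_mul, ← lintegral_smul_measure,
    ← Measure.restrict_smul, ← Real.map_volume_mul_left ha.ne', hemb.restrict_map,
    hemb.lintegral_map, preimage_const_mul_Ioi₀ _ ha, zero_div]

lemma exists_setLIntegral_Ioc_pos {F : ℝ → ℝ≥0∞} (hF : 0 < ∫⁻ u in Ioi 0, F u) :
    ∃ R > 0, 0 < ∫⁻ u in Ioc 0 R, F u := by
  by_contra! h
  have hcover : Ioi (0:ℝ) ⊆ ⋃ n : ℕ, Ioc 0 ((n : ℝ) + 1) := fun x hx =>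
    have ⟨n, hn⟩ := exists_nat_ge x
    mem_iUnion.2 ⟨n, hx, by linarith⟩
  refine hF.ne' (le_antisymm ?_ bot_le)
  -- countable subadditivity holds for any `F`, so no measurability is needed
  calc ∫⁻ u in Ioi 0, F u
      ≤ ∫⁻ u in ⋃ n : ℕ, Ioc 0 ((n : ℝ) + 1), F u := lintegral_mono_set hcover
    _ ≤ ∑' n : ℕ, ∫⁻ u in Ioc 0 ((n : ℝ) + 1), F u := lintegral_iUnion_le _ _
    _ = 0 := ENNReal.tsum_eq_zero.2 fun n => le_antisymm (h _ (by positivity)) bot_le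

lemma ofReal_pow_three_mul_lintegral_Ioi_comp_mul_left {f h : ℝ → ℝ} (hf : ∀ x, 0 ≤ f x)
    {lam : ℝ} (hlam : 0 < lam) :
    ENNReal.ofReal (lam ^ 3) * ∫⁻ y in Ioi 0, ENNReal.ofReal (y ^ 2 * f y * h (lam * y))
      = ∫⁻ u in Ioi 0, ENNReal.ofReal (f (u / lam)) * ENNReal.ofReal (u ^ 2 * h u) := by
  have hpoint : ∀ y, ENNReal.ofReal (lam ^ 3) * ENNReal.ofReal (y ^ 2 * f y * h (lam * y))
      = ENNReal.ofReal lam * (ENNReal.ofReal (f (lam * y / lam))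
          * ENNReal.ofReal ((lam * y) ^ 2 * h (lam * y))) := fun y => by
    rw [mul_div_cancel_left₀ _ hlam.ne', ← ENNReal.ofReal_mul (hf y),
      ← ENNReal.ofReal_mul hlam.le, ← ENNReal.ofReal_mul (by positivity)]
    ring_nf
  have hscale := lintegral_Ioi_comp_mul_left hlam
    fun u => ENNReal.ofReal (f (u / lam)) * ENNReal.ofReal (u ^ 2 * h u)
  beta_reduce at hscale
  rw [← lintegral_const_mul' _ _ ENNReal.ofReal_ne_top, lintegral_congr hpoint,
    lintegral_const_mul' _ _ ENNReal.ofReal_ne_top, hscale, ← mul_assoc,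
    ← ENNReal.ofReal_mul hlam.le, mul_inv_cancel₀ hlam.ne', ENNReal.ofReal_one, one_mul]

lemma lintegral_Ioi_ofReal_comp_div_mul_le {f : ℝ → ℝ} {M : ℝ} (hfM : ∀ x, f x ≤ M)
    (φ : ℝ → ℝ≥0∞) (lam : ℝ) :
    ∫⁻ u in Ioi 0, ENNReal.ofReal (f (u / lam)) * φ u ≤ ENNReal.ofReal M * ∫⁻ u in Ioi 0, φ u := by
  rw [← lintegral_const_mul' _ _ ENNReal.ofReal_ne_top]
  gcongr with u
  exact hfM _

lemma le_lintegral_Ioi_ofReal_comp_div_mul {f : ℝ → ℝ} (hf : AntitoneOn f (Ici 0))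
    (φ : ℝ → ℝ≥0∞) {R lam : ℝ} (hRlam : R ≤ lam) :
    ENNReal.ofReal (f 1) * ∫⁻ u in Ioc 0 R, φ u
      ≤ ∫⁻ u in Ioi 0, ENNReal.ofReal (f (u / lam)) * φ u := by
  rw [← lintegral_const_mul' _ _ ENNReal.ofReal_ne_top]
  refine (setLIntegral_mono' measurableSet_Ioc fun u ⟨hu0, huR⟩ => ?_).trans
    (lintegral_mono_set Ioc_subset_Ioi_self)
  have hlam : 0 < lam := by linarith
  gcongr
  exact hf (div_pos hu0 hlam).le (mem_Ici.2 zero_le_one) ((div_le_one hlam).2 (huR.trans hRlam))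

theorem fisher_information_tail_order_general
    (f g G : ℝ → ℝ) (I : ℝ → ℝ≥0∞) (M : ℝ)
    (hf_bound : ∀ x, 0 < f x ∧ f x ≤ M)
    (hf_mono : AntitoneOn f (Ici (0:ℝ)))
    (hCpos : 0 < ∫⁻ u in Ioi (0:ℝ),
        ENNReal.ofReal (u^2 * (g u)^2 / (G u * (1 - G u))))
    (hCfin : (∫⁻ u in Ioi (0:ℝ),
        ENNReal.ofReal (u^2 * (g u)^2 / (G u * (1 - G u)))) < ⊤)
    (hI : ∀ lam, I lam = 2 * ∫⁻ y in Ioi (0:ℝ),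
        ENNReal.ofReal
          (y^2 * f y * (g (lam * y))^2 / (G (lam * y) * (1 - G (lam * y))))) :
    ∃ c₁ c₂ L : ℝ, 0 < c₁ ∧ c₁ ≤ c₂ ∧ 0 < L ∧
      ∀ lam : ℝ, L ≤ lam →
        ENNReal.ofReal c₁ ≤ ENNReal.ofReal (lam^3) * I lam ∧
        ENNReal.ofReal (lam^3) * I lam ≤ ENNReal.ofReal c₂ := by
  simp_rw [mul_div_assoc] at hCpos hCfin hI
  set C := ∫⁻ u in Ioi (0:ℝ), ENNReal.ofReal (u ^ 2 * ((g u) ^ 2 / (G u * (1 - G u))))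
  obtain ⟨R, hR, hPpos⟩ := exists_setLIntegral_Ioc_pos hCpos
  set P := ∫⁻ u in Ioc 0 R, ENNReal.ofReal (u ^ 2 * ((g u) ^ 2 / (G u * (1 - G u))))
  have hPC : P ≤ C := lintegral_mono_set Ioc_subset_Ioi_self
  have hc₁ : 2 * ENNReal.ofReal (f 1) * P ≠ 0 := by simp [hPpos.ne', (hf_bound 1).1]
  have hc₂ : 2 * ENNReal.ofReal M * C ≠ ⊤ := by finiteness
  have hc₁₂ : 2 * ENNReal.ofReal (f 1) * P ≤ 2 * ENNReal.ofReal M * C := by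
    gcongr
    exact (hf_bound 1).2
  have hc₁_ne_top := ne_top_of_le_ne_top hc₂ hc₁₂
  refine ⟨_, _, R, ENNReal.toReal_pos hc₁ hc₁_ne_top, ENNReal.toReal_mono hc₂ hc₁₂, hR,
    fun lam hlam => ?_⟩
  rw [ENNReal.ofReal_toReal hc₁_ne_top, ENNReal.ofReal_toReal hc₂, hI, mul_left_comm,
    ofReal_pow_three_mul_lintegral_Ioi_comp_mul_left (h := fun u => g u ^ 2 / (G u * (1 - G u)))
      (fun x => (hf_bound x).1.le) (hR.trans_le hlam), mul_assoc, mul_assoc]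
  exact ⟨by gcongr; exact le_lintegral_Ioi_ofReal_comp_div_mul hf_mono _ hlam,
    by gcongr; exact lintegral_Ioi_ofReal_comp_div_mul_le (fun x => (hf_bound x).2) _ lam⟩

/-- under boundedness and unimodality of f and finiteness and
positivity of `C = ∫_0^∞ u² g(u)²/(G(u)(1-G(u))) du`, we have I(λ) = Θ(λ^{-3}):
there are constants 0 < c₁ ≤ c₂ < ∞ and L > 0 with c₁ ≤ λ³ I(λ) ≤ c₂ for λ ≥ L. -/
theorem fisher_information_tail_order
    (f g G : ℝ → ℝ) (I : ℝ → ℝ≥0∞) (M : ℝ)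
    (hf_symm : ∀ x, f (-x) = f x) (hf_bound : ∀ x, 0 < f x ∧ f x ≤ M)
    (hf_mono : AntitoneOn f (Ici (0:ℝ))) (hf_int : ∫ x, f x = 1)
    (hg_cont : Continuous g) (hg_symm : ∀ x, g (-x) = g x)
    (hg_pos : ∀ x, 0 < g x) (hg_int : ∫ x, g x = 1)
    (hG : ∀ t, G t = ∫ u in Iic t, g u)
    (hCpos : 0 < ∫⁻ u in Ioi (0:ℝ),
        ENNReal.ofReal (u^2 * (g u)^2 / (G u * (1 - G u))))
    (hCfin : (∫⁻ u in Ioi (0:ℝ),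
        ENNReal.ofReal (u^2 * (g u)^2 / (G u * (1 - G u)))) < ⊤)
    (hI : ∀ lam, I lam = 2 * ∫⁻ y in Ioi (0:ℝ),
        ENNReal.ofReal
          (y^2 * f y * (g (lam * y))^2 / (G (lam * y) * (1 - G (lam * y))))) :
    ∃ c₁ c₂ L : ℝ, 0 < c₁ ∧ c₁ ≤ c₂ ∧ 0 < L ∧
      ∀ lam : ℝ, L ≤ lam →
        ENNReal.ofReal c₁ ≤ ENNReal.ofReal (lam^3) * I lam ∧
        ENNReal.ofReal (lam^3) * I lam ≤ ENNReal.ofReal c₂ :=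
  fisher_information_tail_order_general f g G I M hf_bound hf_mono hCpos hCfin hI
end

section
/- Suppose π(λ) is an integrable nonnegative function on ℝ, and suppose the symmetric-model marginal ∫_{(0,∞)} ∫_ℝ ∏_{j=1}^n (1/σ) f((y_j-μ)/σ) · (1/σ) dμ dσ is finite for the data y_1,…,y_n. Then the marginal likelihood of the skew-symmetric model with prior π_I(μ,σ,λ) ∝ σ^{-1} π(λ), namely ∫_ℝ ∫_{(0,∞)} ∫_ℝ ∏_{j=1}^n [(2/σ) f((y_j-μ)/σ) G(λ(y_j-μ)/σ)] · σ^{-1} π(λ) dμ dσ dλ, is finite; hence the posterior of (μ,σ,λ) is proper. -/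
open MeasureTheory Set
open scoped ENNReal

/- Since `0 ≤ G ≤ 1`, each skew factor `(2/σ) f(z) G(λz)` is at most twice the symmetric factor
`(1/σ) f(z)`. Hence the skew-model integrand is bounded by `2ⁿ π(λ)` times the symmetric-model
integrand, and the triple integral by `2ⁿ (∫ π) · (symmetric marginal) < ∞`. -/

theorem ENNReal.ofReal_mul_le_of_mem_Icc {a t : ℝ} (ht : t ∈ Icc 0 1) :
    ENNReal.ofReal (a * t) ≤ ENNReal.ofReal a := by
  rcases le_total 0 a with ha | ha
  · exact ENNReal.ofReal_le_ofReal (mul_le_of_le_one_right ha ht.2)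
  · rw [ENNReal.ofReal_of_nonpos (mul_nonpos_of_nonpos_of_nonneg ha ht.1)]
    exact zero_le

theorem lintegral_setLIntegral_lintegral_le_mul {α β γ : Type*} [MeasurableSpace α]
    [MeasurableSpace β] [MeasurableSpace γ] {μα : Measure α} {μβ : Measure β} {μγ : Measure γ}
    {s : Set β} (hs : MeasurableSet s) {F : α → β → γ → ℝ≥0∞} {g : α → ℝ≥0∞}
    {H : β → γ → ℝ≥0∞} (hg : ∀ a, g a ≠ ∞) (hH : ∫⁻ b in s, ∫⁻ c, H b c ∂μγ ∂μβ ≠ ∞)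
    (hF : ∀ a, ∀ b ∈ s, ∀ c, F a b c ≤ g a * H b c) :
    ∫⁻ a, ∫⁻ b in s, ∫⁻ c, F a b c ∂μγ ∂μβ ∂μα
      ≤ (∫⁻ a, g a ∂μα) * ∫⁻ b in s, ∫⁻ c, H b c ∂μγ ∂μβ := by
  rw [← lintegral_mul_const' _ _ hH]
  refine lintegral_mono fun a => ?_
  rw [← lintegral_const_mul' _ _ (hg a)]
  refine setLIntegral_mono' hs fun b hb => ?_
  rw [← lintegral_const_mul' _ _ (hg a)]
  exact lintegral_mono (hF a b hb)

theorem skew_integrand_le_mul_symmetric_integrand {n : ℕ} (f G : ℝ → ℝ)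
    (hG01 : ∀ t, G t ∈ Icc (0:ℝ) 1) (y : Fin n → ℝ) (lam p : ℝ) {σ : ℝ} (hσ : 0 < σ) (μ : ℝ) :
    (∏ j, ENNReal.ofReal ((2/σ) * f ((y j - μ)/σ) * G (lam * ((y j - μ)/σ))))
        * ENNReal.ofReal ((1/σ) * p)
      ≤ (2 ^ n * ENNReal.ofReal p)
        * ((∏ j, ENNReal.ofReal ((1/σ) * f ((y j - μ)/σ))) * ENNReal.ofReal (1/σ)) := by
  have hfactor : ∀ j, ENNReal.ofReal ((2/σ) * f ((y j - μ)/σ) * G (lam * ((y j - μ)/σ)))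
      ≤ 2 * ENNReal.ofReal ((1/σ) * f ((y j - μ)/σ)) := fun j =>
    calc _ ≤ ENNReal.ofReal ((2/σ) * f ((y j - μ)/σ)) :=
          ENNReal.ofReal_mul_le_of_mem_Icc (hG01 _)
      _ = 2 * ENNReal.ofReal ((1/σ) * f ((y j - μ)/σ)) := by
          rw [← ENNReal.ofReal_ofNat 2, ← ENNReal.ofReal_mul zero_le_two]
          ring_nf
  calc _ ≤ (∏ j, 2 * ENNReal.ofReal ((1/σ) * f ((y j - μ)/σ)))
          * (ENNReal.ofReal (1/σ) * ENNReal.ofReal p) := by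
        gcongr with j
        · exact hfactor j
        · rw [ENNReal.ofReal_mul (by positivity)]
    _ = _ := by
        rw [Finset.prod_mul_distrib, Finset.prod_const, Finset.card_univ, Fintype.card_fin]
        ring

theorem posterior_propriety_skew_symmetric_general
    (f G π : ℝ → ℝ) (n : ℕ) (y : Fin n → ℝ)
    (hG01 : ∀ t, G t ∈ Icc (0:ℝ) 1)
    (hπ_int : ∫⁻ lam, ENNReal.ofReal (π lam) < ⊤)
    (hsym_marginal :
      (∫⁻ σ in Ioi (0:ℝ), ∫⁻ μ : ℝ,
          (∏ j, ENNReal.ofReal ((1/σ) * f ((y j - μ)/σ))) * ENNReal.ofReal (1/σ))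
        < ⊤) :
    (∫⁻ lam : ℝ, ∫⁻ σ in Ioi (0:ℝ), ∫⁻ μ : ℝ,
        (∏ j, ENNReal.ofReal ((2/σ) * f ((y j - μ)/σ) * G (lam * ((y j - μ)/σ))))
          * ENNReal.ofReal ((1/σ) * π lam))
      < ⊤ := by
  have h2n : (2 : ℝ≥0∞) ^ n ≠ ∞ := by simp
  refine (lintegral_setLIntegral_lintegral_le_mul measurableSet_Ioi
    (g := fun lam => 2 ^ n * ENNReal.ofReal (π lam))
    (fun _ => ENNReal.mul_ne_top h2n ENNReal.ofReal_ne_top) hsym_marginal.ne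
    fun lam σ hσ μ => skew_integrand_le_mul_symmetric_integrand f G hG01 y lam (π lam) hσ μ
    ).trans_lt ?_
  rw [lintegral_const_mul' _ _ h2n]
  exact ENNReal.mul_lt_top (ENNReal.mul_lt_top h2n.lt_top hπ_int) hsym_marginal

/-- if π is integrable and the symmetric-model marginal is
finite, then the marginal likelihood of the skew-symmetric model with the
independence-Jeffreys-type prior σ⁻¹ π(λ) is finite (the posterior is proper). -/
theorem posterior_propriety_skew_symmetric
    (f G π : ℝ → ℝ) (n : ℕ) (y : Fin n → ℝ)
    (hf_meas : Measurable f) (hf_nonneg : ∀ x, 0 ≤ f x) (hf_int : ∫ x, f x = 1)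
    (hG_meas : Measurable G) (hG01 : ∀ t, G t ∈ Icc (0:ℝ) 1)
    (hπ_meas : Measurable π) (hπ_nonneg : ∀ lam, 0 ≤ π lam)
    (hπ_int : ∫⁻ lam, ENNReal.ofReal (π lam) < ⊤)
    (hsym_marginal :
      (∫⁻ σ in Ioi (0:ℝ), ∫⁻ μ : ℝ,
          (∏ j, ENNReal.ofReal ((1/σ) * f ((y j - μ)/σ))) * ENNReal.ofReal (1/σ))
        < ⊤) :
    (∫⁻ lam : ℝ, ∫⁻ σ in Ioi (0:ℝ), ∫⁻ μ : ℝ,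
        (∏ j, ENNReal.ofReal ((2/σ) * f ((y j - μ)/σ) * G (lam * ((y j - μ)/σ))))
          * ENNReal.ofReal ((1/σ) * π lam))
      < ⊤ :=
  posterior_propriety_skew_symmetric_general f G π n y hG01 hπ_int hsym_marginal
end

section
/- Let f be a scale mixture of normals: f(x) = ∫_{(0,∞)} √(τ/(2π)) exp(-τ x²/2) dP(τ) for some probability measure P on (0,∞). If n = 2 and the observations y_1, y_2 satisfy y_1 ≠ y_2, then ∫_{(0,∞)} ∫_ℝ ∏_{j=1}^n (1/σ) f((y_j-μ)/σ) · σ^{-1} dμ dσ < ∞. -/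
open MeasureTheory Set
open Real
open scoped ENNReal

noncomputable def gg (τ x : ℝ) : ℝ := Real.sqrt (τ/(2*Real.pi)) * Real.exp (-τ*x^2/2)

lemma gg_nonneg (τ x : ℝ) : 0 ≤ gg τ x := by unfold gg; positivity

lemma gg_meas : Measurable (fun p : ℝ × ℝ => gg p.1 p.2) := by
  unfold gg
  exact ((measurable_fst.div_const _).sqrt).mul
    (((measurable_fst.neg.mul (measurable_snd.pow_const 2)).div_const 2).exp)

lemma ofReal_gg_meas (x : ℝ) : Measurable (fun τ : ℝ => ENNReal.ofReal (gg τ x)) := by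
  apply Measurable.ennreal_ofReal
  unfold gg
  exact ((measurable_id.div_const _).sqrt).mul
    (((measurable_id.neg.mul_const _).div_const 2).exp)

noncomputable def FF (y₁ y₂ σ μ τ₁ τ₂ : ℝ) : ℝ :=
  (1/σ) * gg τ₁ ((y₁-μ)/σ) * ((1/σ) * gg τ₂ ((y₂-μ)/σ)) * (1/σ)

lemma f_le (P : Measure ℝ) (x : ℝ) :
    ENNReal.ofReal (∫ τ, gg τ x ∂P) ≤ ∫⁻ τ, ENNReal.ofReal (gg τ x) ∂P := by
  by_cases hI : Integrable (fun τ => gg τ x) P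
  · rw [ofReal_integral_eq_lintegral_ofReal hI (Filter.Eventually.of_forall fun τ => gg_nonneg τ x)]
  · rw [integral_undef hI]; simp

lemma pointwise_le (P : Measure ℝ) (f : ℝ → ℝ)
    (hf : ∀ x : ℝ, f x = ∫ τ, Real.sqrt (τ / (2 * Real.pi)) * Real.exp (-τ * x^2 / 2) ∂P)
    (y₁ y₂ σ μ : ℝ) :
    ENNReal.ofReal ((1/σ) * f ((y₁ - μ)/σ)) * ENNReal.ofReal ((1/σ) * f ((y₂ - μ)/σ))
      * ENNReal.ofReal (1/σ)
    ≤ ∫⁻ τ₁, ∫⁻ τ₂, ENNReal.ofReal (FF y₁ y₂ σ μ τ₁ τ₂) ∂P ∂P := by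
  have hf' : ∀ x : ℝ, f x = ∫ τ, gg τ x ∂P := by
    intro x; rw [hf x]; rfl
  rcases le_or_gt σ 0 with hσ | hσ
  · have h0 : (1:ℝ)/σ ≤ 0 := one_div_nonpos.mpr hσ
    rw [ENNReal.ofReal_eq_zero.mpr h0, mul_zero]
    exact zero_le
  · have h1σ : (0:ℝ) ≤ 1/σ := by positivity
    set r := ENNReal.ofReal (1/σ) with hr
    set a : ℝ → ℝ≥0∞ := fun τ => ENNReal.ofReal (gg τ ((y₁-μ)/σ)) with ha
    set b : ℝ → ℝ≥0∞ := fun τ => ENNReal.ofReal (gg τ ((y₂-μ)/σ)) with hb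
    have hmb : Measurable b := ofReal_gg_meas _
    have hma : Measurable a := ofReal_gg_meas _
    have hRHS : (∫⁻ τ₁, ∫⁻ τ₂, ENNReal.ofReal (FF y₁ y₂ σ μ τ₁ τ₂) ∂P ∂P)
        = (∫⁻ τ, a τ ∂P) * (r * r * r * ∫⁻ τ, b τ ∂P) := by
      have e : ∀ τ₁ τ₂ : ℝ, ENNReal.ofReal (FF y₁ y₂ σ μ τ₁ τ₂)
          = a τ₁ * (r * r * r) * b τ₂ := by
        intro τ₁ τ₂
        unfold FF
        rw [ENNReal.ofReal_mul (mul_nonneg (mul_nonneg h1σ (gg_nonneg _ _))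
            (mul_nonneg h1σ (gg_nonneg _ _))),
          ENNReal.ofReal_mul (mul_nonneg h1σ (gg_nonneg _ _)),
          ENNReal.ofReal_mul h1σ, ENNReal.ofReal_mul h1σ]
        simp only [ha, hb, hr]
        ring
      simp_rw [e]
      have inner : ∀ τ₁ : ℝ, (∫⁻ τ₂, a τ₁ * (r*r*r) * b τ₂ ∂P)
          = a τ₁ * (r*r*r) * ∫⁻ τ, b τ ∂P := by
        intro τ₁
        exact lintegral_const_mul' _ _ (by
          exact ENNReal.mul_ne_top ENNReal.ofReal_ne_top
            (ENNReal.mul_ne_top (ENNReal.mul_ne_top ENNReal.ofReal_ne_top ENNReal.ofReal_ne_top)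
              ENNReal.ofReal_ne_top))
      simp_rw [inner]
      have : ∀ τ₁ : ℝ, a τ₁ * (r*r*r) * (∫⁻ τ, b τ ∂P) = a τ₁ * ((r*r*r) * ∫⁻ τ, b τ ∂P) := by
        intro τ₁; ring
      simp_rw [this]
      rw [lintegral_mul_const'' _ hma.aemeasurable]
    rw [hRHS, hf' ((y₁-μ)/σ), hf' ((y₂-μ)/σ),
      ENNReal.ofReal_mul h1σ, ENNReal.ofReal_mul h1σ]
    calc r * ENNReal.ofReal (∫ τ, gg τ ((y₁-μ)/σ) ∂P) * (r * ENNReal.ofReal (∫ τ, gg τ ((y₂-μ)/σ) ∂P)) * r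
        ≤ r * (∫⁻ τ, a τ ∂P) * (r * ∫⁻ τ, b τ ∂P) * r := by
          gcongr
          · exact f_le P ((y₁-μ)/σ)
          · exact f_le P ((y₂-μ)/σ)
      _ = (∫⁻ τ, a τ ∂P) * (r * r * r * ∫⁻ τ, b τ ∂P) := by ring

lemma FF_meas (y₁ y₂ : ℝ) :
    Measurable (fun q : (ℝ×ℝ)×(ℝ×ℝ) => ENNReal.ofReal (FF y₁ y₂ q.1.1 q.1.2 q.2.1 q.2.2)) := by
  apply Measurable.ennreal_ofReal
  unfold FF
  simp only [one_div]
  exact (((measurable_fst.fst.inv).mul (gg_meas.comp (measurable_snd.fst.prodMk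
      ((measurable_const.sub measurable_fst.snd).div measurable_fst.fst)))).mul
    ((measurable_fst.fst.inv).mul (gg_meas.comp (measurable_snd.snd.prodMk
      ((measurable_const.sub measurable_fst.snd).div measurable_fst.fst))))).mul
    (measurable_fst.fst.inv)

lemma FF_meas_w (y₁ y₂ σ μ : ℝ) :
    Measurable (fun w : ℝ×ℝ => ENNReal.ofReal (FF y₁ y₂ σ μ w.1 w.2)) := by
  apply Measurable.ennreal_ofReal
  unfold FF
  exact ((measurable_const.mul (gg_meas.comp (measurable_fst.prodMk measurable_const))).mul
    (measurable_const.mul (gg_meas.comp (measurable_snd.prodMk measurable_const)))).mul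
    measurable_const

lemma FF_meas' (y₁ y₂ : ℝ) :
    Measurable (Function.uncurry fun (z w : ℝ×ℝ) => ENNReal.ofReal (FF y₁ y₂ z.1 z.2 w.1 w.2)) := by
  rw [Function.uncurry_def]
  exact FF_meas y₁ y₂

lemma FF_meas_z (y₁ y₂ τ₁ τ₂ : ℝ) :
    Measurable (fun z : ℝ×ℝ => ENNReal.ofReal (FF y₁ y₂ z.1 z.2 τ₁ τ₂)) := by
  apply Measurable.ennreal_ofReal
  unfold FF
  simp only [one_div]
  exact (((measurable_fst.inv).mul (gg_meas.comp (measurable_const.prodMk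
      ((measurable_const.sub measurable_snd).div measurable_fst)))).mul
    ((measurable_fst.inv).mul (gg_meas.comp (measurable_const.prodMk
      ((measurable_const.sub measurable_snd).div measurable_fst))))).mul
    (measurable_fst.inv)

lemma gauss_shift (b m : ℝ) (hb : 0 < b) :
    ∫⁻ μ : ℝ, ENNReal.ofReal (Real.exp (-(b*(μ - m)^2))) = ENNReal.ofReal (Real.sqrt (π / b)) := by
  have hint : Integrable (fun μ : ℝ => Real.exp (-(b*(μ - m)^2))) := by
    simpa [neg_mul] using (integrable_exp_neg_mul_sq hb).comp_sub_right m
  rw [← ofReal_integral_eq_lintegral_ofReal hint (Filter.Eventually.of_forall fun x => (Real.exp_pos _).le)]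
  congr 1
  have := integral_sub_right_eq_self (μ := volume) (fun x : ℝ => Real.exp (-(b * x^2))) m
  rw [this]
  simpa [neg_mul] using integral_gaussian b

lemma inv_image_Ioi : (fun σ : ℝ => σ⁻¹) '' Ioi 0 = Ioi 0 := by
  ext t
  constructor
  · rintro ⟨σ, hσ, rfl⟩; exact inv_pos.mpr (mem_Ioi.mp hσ)
  · intro ht; exact ⟨t⁻¹, mem_Ioi.mpr (inv_pos.mpr (mem_Ioi.mp ht)), by simp⟩

lemma sigma_integral (c : ℝ) (hc : 0 < c) :
    (∫ σ in Ioi (0:ℝ), (σ^2)⁻¹ * Real.exp (-(c / (2*σ^2)))) = Real.sqrt (π/(c/2)) / 2 ∧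
    IntegrableOn (fun σ : ℝ => (σ^2)⁻¹ * Real.exp (-(c / (2*σ^2)))) (Ioi 0) := by
  have hc2 : 0 < c/2 := by linarith
  have hderiv : ∀ σ ∈ Ioi (0:ℝ), HasDerivWithinAt (fun x : ℝ => x⁻¹) (-(σ^2)⁻¹) (Ioi 0) σ :=
    fun σ hσ => (hasDerivAt_inv (ne_of_gt hσ)).hasDerivWithinAt
  have hinj : InjOn (fun σ : ℝ => σ⁻¹) (Ioi 0) := fun a _ b _ h => inv_injective h
  have key := integral_image_eq_integral_abs_deriv_smul measurableSet_Ioi hderiv hinj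
      (fun t : ℝ => Real.exp (-(c/2 * t^2)))
  have keyI := integrableOn_image_iff_integrableOn_abs_deriv_smul measurableSet_Ioi hderiv hinj
      (fun t : ℝ => Real.exp (-(c/2 * t^2)))
  rw [inv_image_Ioi] at key keyI
  have hcong : ∀ σ ∈ Ioi (0:ℝ), |(-(σ^2)⁻¹)| • Real.exp (-(c/2 * (σ⁻¹)^2)) = (σ^2)⁻¹ * Real.exp (-(c / (2*σ^2))) := by
    intro σ hσ
    have hσ0 : (0:ℝ) < σ := hσ
    have h1 : |(-(σ^2)⁻¹)| = (σ^2)⁻¹ := by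
      rw [abs_neg, abs_inv, abs_of_pos (by positivity)]
    have h2 : c/2 * (σ⁻¹)^2 = c / (2*σ^2) := by field_simp
    rw [h1, h2, smul_eq_mul]
  have hval : (∫ σ in Ioi (0:ℝ), (σ^2)⁻¹ * Real.exp (-(c / (2*σ^2)))) = Real.sqrt (π/(c/2)) / 2 := by
    rw [← setIntegral_congr_fun measurableSet_Ioi hcong, ← key]
    simpa [neg_mul] using integral_gaussian_Ioi (c/2)
  refine ⟨hval, ?_⟩
  have : IntegrableOn (fun t : ℝ => Real.exp (-(c/2 * t^2))) (Ioi 0) := by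
    simpa [neg_mul] using (integrable_exp_neg_mul_sq hc2).integrableOn
  rw [keyI] at this
  exact this.congr_fun hcong measurableSet_Ioi

lemma sigma_lintegral (c : ℝ) (hc : 0 < c) :
    ∫⁻ σ in Ioi (0:ℝ), ENNReal.ofReal ((σ^2)⁻¹ * Real.exp (-(c / (2*σ^2))))
      = ENNReal.ofReal (Real.sqrt (π/(c/2)) / 2) := by
  obtain ⟨hval, hint⟩ := sigma_integral c hc
  rw [← ofReal_integral_eq_lintegral_ofReal hint ?_, hval]
  filter_upwards [self_mem_ae_restrict (measurableSet_Ioi)] with σ hσ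
  have : (0:ℝ) < σ := hσ
  positivity

lemma K_le (y₁ y₂ : ℝ) (hy : y₁ ≠ y₂) (τ₁ τ₂ : ℝ) (h₁ : 0 < τ₁) (h₂ : 0 < τ₂) :
    (∫⁻ σ in Ioi (0:ℝ), ∫⁻ μ : ℝ, ENNReal.ofReal (FF y₁ y₂ σ μ τ₁ τ₂))
      ≤ ENNReal.ofReal (1/(2*|y₁ - y₂|)) := by
  have hpi : (0:ℝ) < π := Real.pi_pos
  set d := y₁ - y₂ with hd'
  have hd : d ≠ 0 := sub_ne_zero.mpr hy
  have hd2 : (0:ℝ) < d^2 := pow_two_pos_of_ne_zero hd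
  set A := τ₁ + τ₂ with hA'
  have hA : 0 < A := add_pos h₁ h₂
  set B := τ₁*τ₂*d^2/A with hB'
  have hB : 0 < B := div_pos (mul_pos (mul_pos h₁ h₂) hd2) hA
  set m := (τ₁*y₁ + τ₂*y₂)/A with hm'
  set c₀ := Real.sqrt (τ₁/(2*π)) * Real.sqrt (τ₂/(2*π)) with hc₀'
  have hc₀ : 0 ≤ c₀ := mul_nonneg (Real.sqrt_nonneg _) (Real.sqrt_nonneg _)
  have hσint : ∀ σ ∈ Ioi (0:ℝ), (∫⁻ μ : ℝ, ENNReal.ofReal (FF y₁ y₂ σ μ τ₁ τ₂))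
      = ENNReal.ofReal (c₀ * Real.sqrt (2*π/A))
        * ENNReal.ofReal ((σ^2)⁻¹ * Real.exp (-(B/(2*σ^2)))) := by
    intro σ hσ
    have hσ0 : (0:ℝ) < σ := hσ
    have hσ' : σ ≠ 0 := ne_of_gt hσ0
    have hk : 0 ≤ c₀ * (σ^3)⁻¹ * Real.exp (-(B/(2*σ^2))) := by positivity
    have key : ∀ μ : ℝ, FF y₁ y₂ σ μ τ₁ τ₂
        = (c₀ * (σ^3)⁻¹ * Real.exp (-(B/(2*σ^2)))) * Real.exp (-((A/(2*σ^2)) * (μ - m)^2)) := by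
      intro μ
      have hexp : Real.exp (-τ₁*((y₁-μ)/σ)^2/2) * Real.exp (-τ₂*((y₂-μ)/σ)^2/2)
          = Real.exp (-(B/(2*σ^2))) * Real.exp (-((A/(2*σ^2)) * (μ - m)^2)) := by
        rw [← Real.exp_add, ← Real.exp_add]
        congr 1
        simp only [hB', hm', hA', hd']
        field_simp
        ring
      unfold FF gg
      calc (1/σ) * (Real.sqrt (τ₁/(2*π)) * Real.exp (-τ₁*((y₁-μ)/σ)^2/2))
            * ((1/σ) * (Real.sqrt (τ₂/(2*π)) * Real.exp (-τ₂*((y₂-μ)/σ)^2/2))) * (1/σ)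
          = c₀ * (σ^3)⁻¹ * (Real.exp (-τ₁*((y₁-μ)/σ)^2/2) * Real.exp (-τ₂*((y₂-μ)/σ)^2/2)) := by
            rw [hc₀']; field_simp
        _ = (c₀ * (σ^3)⁻¹ * Real.exp (-(B/(2*σ^2)))) * Real.exp (-((A/(2*σ^2)) * (μ - m)^2)) := by
            rw [hexp]; ring
    simp_rw [key, ENNReal.ofReal_mul hk]
    rw [lintegral_const_mul' _ _ ENNReal.ofReal_ne_top,
      gauss_shift (A/(2*σ^2)) m (by positivity)]
    rw [← ENNReal.ofReal_mul hk, ← ENNReal.ofReal_mul (by positivity)]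
    congr 1
    have hπA : π/(A/(2*σ^2)) = σ^2 * (2*π/A) := by field_simp
    rw [hπA, Real.sqrt_mul (sq_nonneg σ), Real.sqrt_sq hσ0.le]
    field_simp
  rw [setLIntegral_congr_fun measurableSet_Ioi hσint,
    lintegral_const_mul' _ _ ENNReal.ofReal_ne_top, sigma_lintegral B hB,
    ← ENNReal.ofReal_mul (by positivity)]
  apply le_of_eq
  congr 1
  have h2 : π/(B/2) = 2*π/B := by field_simp
  have hn1 : (0:ℝ) ≤ τ₁/(2*π) := by positivity
  have hn2 : (0:ℝ) ≤ (τ₁/(2*π)) * (τ₂/(2*π)) := by positivity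
  have hn3 : (0:ℝ) ≤ (τ₁/(2*π)) * (τ₂/(2*π)) * (2*π/A) := by positivity
  have hXtot : (τ₁/(2*π)) * (τ₂/(2*π)) * (2*π/A) * (2*π/B) = (d^2)⁻¹ := by
    simp only [hB', hA']
    field_simp
  rw [hc₀', h2, ← Real.sqrt_mul hn1, ← Real.sqrt_mul hn2, ← mul_div_assoc,
    ← Real.sqrt_mul hn3, hXtot, Real.sqrt_inv, Real.sqrt_sq_eq_abs]
  have habs : |d| ≠ 0 := abs_ne_zero.mpr hd
  field_simp

/-- for f a scale mixture of normals and two distinct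
observations, the marginal of the location-scale model with prior σ⁻¹ is
finite (the posterior of (μ,σ) is proper). -/
theorem scale_mixture_two_obs_proper
    (P : Measure ℝ) [IsProbabilityMeasure P] (hP : P (Ioi (0:ℝ)) = 1)
    (f : ℝ → ℝ)
    (hf : ∀ x : ℝ, f x = ∫ τ, Real.sqrt (τ / (2 * Real.pi)) * Real.exp (-τ * x^2 / 2) ∂P)
    (y₁ y₂ : ℝ) (hy : y₁ ≠ y₂) :
    (∫⁻ σ in Ioi (0:ℝ), ∫⁻ μ : ℝ,
        ENNReal.ofReal ((1/σ) * f ((y₁ - μ)/σ))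
          * ENNReal.ofReal ((1/σ) * f ((y₂ - μ)/σ))
          * ENNReal.ofReal (1/σ))
      < ⊤ := by
  have hFFm := FF_meas y₁ y₂
  have hwmeas : ∀ σ μ : ℝ, Measurable (fun w : ℝ×ℝ => ENNReal.ofReal (FF y₁ y₂ σ μ w.1 w.2)) :=
    fun σ μ => FF_meas_w y₁ y₂ σ μ
  have hzmeas : Measurable (fun z : ℝ×ℝ => ∫⁻ w, ENNReal.ofReal (FF y₁ y₂ z.1 z.2 w.1 w.2) ∂(P.prod P)) :=
    Measurable.lintegral_prod_right (FF_meas' y₁ y₂)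
  have step1 : (∫⁻ σ in Ioi (0:ℝ), ∫⁻ μ : ℝ,
        ENNReal.ofReal ((1/σ) * f ((y₁ - μ)/σ))
          * ENNReal.ofReal ((1/σ) * f ((y₂ - μ)/σ))
          * ENNReal.ofReal (1/σ))
      ≤ ∫⁻ σ in Ioi (0:ℝ), ∫⁻ μ : ℝ, ∫⁻ τ₁, ∫⁻ τ₂, ENNReal.ofReal (FF y₁ y₂ σ μ τ₁ τ₂) ∂P ∂P :=
    lintegral_mono fun σ => lintegral_mono fun μ => pointwise_le P f hf y₁ y₂ σ μ
  have step2 : (∫⁻ σ in Ioi (0:ℝ), ∫⁻ μ : ℝ, ∫⁻ τ₁, ∫⁻ τ₂, ENNReal.ofReal (FF y₁ y₂ σ μ τ₁ τ₂) ∂P ∂P)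
      = ∫⁻ w, (∫⁻ σ in Ioi (0:ℝ), ∫⁻ μ : ℝ, ENNReal.ofReal (FF y₁ y₂ σ μ w.1 w.2)) ∂(P.prod P) := by
    calc (∫⁻ σ in Ioi (0:ℝ), ∫⁻ μ : ℝ, ∫⁻ τ₁, ∫⁻ τ₂, ENNReal.ofReal (FF y₁ y₂ σ μ τ₁ τ₂) ∂P ∂P)
        = ∫⁻ σ in Ioi (0:ℝ), ∫⁻ μ : ℝ, ∫⁻ w, ENNReal.ofReal (FF y₁ y₂ σ μ w.1 w.2) ∂(P.prod P) := by
          refine lintegral_congr fun σ => lintegral_congr fun μ => ?_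
          exact (lintegral_prod (fun w : ℝ×ℝ => ENNReal.ofReal (FF y₁ y₂ σ μ w.1 w.2)) (hwmeas σ μ).aemeasurable).symm
      _ = ∫⁻ z, (∫⁻ w, ENNReal.ofReal (FF y₁ y₂ z.1 z.2 w.1 w.2) ∂(P.prod P))
            ∂((volume.restrict (Ioi (0:ℝ))).prod (volume : Measure ℝ)) :=
          (lintegral_prod (fun z : ℝ×ℝ => ∫⁻ w, ENNReal.ofReal (FF y₁ y₂ z.1 z.2 w.1 w.2) ∂(P.prod P)) hzmeas.aemeasurable).symm
      _ = ∫⁻ q, ENNReal.ofReal (FF y₁ y₂ q.1.1 q.1.2 q.2.1 q.2.2)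
            ∂(((volume.restrict (Ioi (0:ℝ))).prod (volume : Measure ℝ)).prod (P.prod P)) :=
          (lintegral_prod (fun q : (ℝ×ℝ)×(ℝ×ℝ) => ENNReal.ofReal (FF y₁ y₂ q.1.1 q.1.2 q.2.1 q.2.2)) hFFm.aemeasurable).symm
      _ = ∫⁻ w, (∫⁻ z, ENNReal.ofReal (FF y₁ y₂ z.1 z.2 w.1 w.2)
            ∂((volume.restrict (Ioi (0:ℝ))).prod (volume : Measure ℝ))) ∂(P.prod P) :=
          lintegral_prod_symm (fun q : (ℝ×ℝ)×(ℝ×ℝ) => ENNReal.ofReal (FF y₁ y₂ q.1.1 q.1.2 q.2.1 q.2.2)) hFFm.aemeasurable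
      _ = ∫⁻ w, (∫⁻ σ in Ioi (0:ℝ), ∫⁻ μ : ℝ, ENNReal.ofReal (FF y₁ y₂ σ μ w.1 w.2)) ∂(P.prod P) := by
          refine lintegral_congr fun w => ?_
          exact lintegral_prod (fun z : ℝ×ℝ => ENNReal.ofReal (FF y₁ y₂ z.1 z.2 w.1 w.2)) ((FF_meas_z y₁ y₂ w.1 w.2).aemeasurable)
  have hae : ∀ᵐ w ∂(P.prod P), w ∈ Ioi (0:ℝ) ×ˢ Ioi (0:ℝ) := by
    have hs : MeasurableSet (Ioi (0:ℝ) ×ˢ Ioi (0:ℝ)) := measurableSet_Ioi.prod measurableSet_Ioi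
    have h1 : (P.prod P) (Ioi (0:ℝ) ×ˢ Ioi (0:ℝ)) = 1 := by
      rw [Measure.prod_prod, hP]; simp
    have h0 : (P.prod P) (Ioi (0:ℝ) ×ˢ Ioi (0:ℝ))ᶜ = 0 := by
      rw [measure_compl hs (measure_ne_top _ _), h1, measure_univ, tsub_self]
    exact (MeasureTheory.mem_ae_iff.mpr h0)
  have step3 : (∫⁻ w, (∫⁻ σ in Ioi (0:ℝ), ∫⁻ μ : ℝ, ENNReal.ofReal (FF y₁ y₂ σ μ w.1 w.2)) ∂(P.prod P))
      ≤ ∫⁻ _, ENNReal.ofReal (1/(2*|y₁ - y₂|)) ∂(P.prod P) := by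
    refine lintegral_mono_ae ?_
    filter_upwards [hae] with w hw
    exact K_le y₁ y₂ hy w.1 w.2 hw.1 hw.2
  have step4 : (∫⁻ _, ENNReal.ofReal (1/(2*|y₁ - y₂|)) ∂(P.prod P)) < ⊤ := by
    rw [lintegral_const, measure_univ, mul_one]
    exact ENNReal.ofReal_lt_top
  exact lt_of_le_of_lt (step1.trans (le_of_eq step2) |>.trans step3) step4
end

section
/- The function λ ↦ √(∫_0^∞ x² sech²(x/2) sech²(λx/2) dx) is integrable over ℝ. -/
/-! Write `J λ` for the integral and `C = ∫₀^∞ x² sech²(x/2) dx`, which is finite because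
`sech u ≤ 2e^{-u}` reduces it to `Γ(3)`. Since `sech ≤ 1`, `J λ ≤ C`; dropping the factor
`sech²(x/2)` instead and substituting `u = |λ| x` gives `J λ ≤ |λ|⁻³ C`. Together,
`J λ ≤ 8 C (1 + |λ|)⁻³`, so `√(J λ)` is dominated by a multiple of `(1 + |λ|)^{-3/2}`, which is
integrable on `ℝ`. -/

open MeasureTheory Set Real Module

theorem Real.one_div_cosh_le_one (u : ℝ) : 1 / cosh u ≤ 1 :=
  (div_le_one (cosh_pos u)).2 (one_le_cosh u)

theorem Real.one_div_cosh_le_two_mul_exp_neg (u : ℝ) : 1 / cosh u ≤ 2 * exp (-u) := by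
  have hcosh : exp u / 2 ≤ cosh u := by
    rw [cosh_eq]; linarith [exp_pos (-u)]
  calc 1 / cosh u ≤ 1 / (exp u / 2) := one_div_le_one_div_of_le (by positivity) hcosh
    _ = 2 * exp (-u) := by rw [exp_neg]; field_simp

theorem Real.cosh_abs_mul (a x : ℝ) : cosh (|a| * x) = cosh (a * x) := by
  rw [← cosh_abs, ← cosh_abs (a * x), abs_mul, abs_mul, abs_abs]

theorem integrable_sqrt_of_le_mul_sq_one_add_norm_rpow {E : Type*} [NormedAddCommGroup E]
    [NormedSpace ℝ E] [FiniteDimensional ℝ E] [MeasurableSpace E] [BorelSpace E]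
    {μ : Measure E} [μ.IsAddHaarMeasure] {f : E → ℝ} {C r : ℝ}
    (hf : AEStronglyMeasurable f μ) (hr : finrank ℝ E < r)
    (hle : ∀ x, f x ≤ C * ((1 + ‖x‖) ^ (-r)) ^ 2) :
    Integrable (fun x ↦ √(f x)) μ := by
  refine ((integrable_one_add_norm hr).const_mul √C).mono'
    (continuous_sqrt.comp_aestronglyMeasurable hf) (.of_forall fun x ↦ ?_)
  rw [Real.norm_of_nonneg (sqrt_nonneg _)]
  calc √(f x) ≤ √(C * ((1 + ‖x‖) ^ (-r)) ^ 2) := sqrt_le_sqrt (hle x)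
    _ = √C * (1 + ‖x‖) ^ (-r) := by
      rw [sqrt_mul' _ (sq_nonneg _), sqrt_sq (by positivity)]

noncomputable def logisticKernel (x : ℝ) : ℝ := x ^ 2 * (1 / cosh (x / 2)) ^ 2

theorem logisticKernel_nonneg (x : ℝ) : 0 ≤ logisticKernel x := by
  unfold logisticKernel; positivity

theorem continuous_logisticKernel : Continuous logisticKernel := by
  unfold logisticKernel; fun_prop (disch := exact fun _ ↦ (cosh_pos _).ne')

theorem logisticKernel_le (x : ℝ) : logisticKernel x ≤ 4 * (exp (-x) * x ^ 2) :=
  calc x ^ 2 * (1 / cosh (x / 2)) ^ 2 ≤ x ^ 2 * (2 * exp (-(x / 2))) ^ 2 := by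
        gcongr; exact one_div_cosh_le_two_mul_exp_neg _
    _ = 4 * (exp (-x) * x ^ 2) := by
        rw [mul_pow, ← exp_nat_mul]; ring_nf

theorem integrableOn_logisticKernel : IntegrableOn logisticKernel (Ioi 0) := by
  have hGamma : IntegrableOn (fun x ↦ exp (-x) * x ^ 2) (Ioi 0) := by
    simpa [show (3 : ℝ) - 1 = (2 : ℕ) by norm_num, rpow_natCast]
      using GammaIntegral_convergent (s := 3) (by norm_num)
  refine (hGamma.const_mul 4).mono' continuous_logisticKernel.aestronglyMeasurable
    (.of_forall fun x ↦ ?_)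
  rw [Real.norm_of_nonneg (logisticKernel_nonneg x)]
  exact logisticKernel_le x

theorem sq_mul_one_div_cosh_sq_eq {lam : ℝ} (h : lam ≠ 0) (x : ℝ) :
    x ^ 2 * (1 / cosh (lam * x / 2)) ^ 2 = (|lam| ^ 2)⁻¹ * logisticKernel (|lam| * x) := by
  rw [logisticKernel, mul_div_assoc |lam|, cosh_abs_mul, ← mul_div_assoc]
  field_simp

theorem integrableOn_sq_mul_one_div_cosh_sq {lam : ℝ} (h : lam ≠ 0) :
    IntegrableOn (fun x ↦ x ^ 2 * (1 / cosh (lam * x / 2)) ^ 2) (Ioi 0) := by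
  simp_rw [sq_mul_one_div_cosh_sq_eq h]
  refine Integrable.const_mul ?_ _
  exact (integrableOn_Ioi_comp_mul_left_iff logisticKernel 0 (abs_pos.2 h)).2
    (by simpa using integrableOn_logisticKernel)

theorem integral_sq_mul_one_div_cosh_sq {lam : ℝ} (h : lam ≠ 0) :
    ∫ x in Ioi 0, x ^ 2 * (1 / cosh (lam * x / 2)) ^ 2
      = (|lam| ^ 3)⁻¹ * ∫ x in Ioi 0, logisticKernel x := by
  simp_rw [sq_mul_one_div_cosh_sq_eq h]
  rw [integral_const_mul, integral_comp_mul_left_Ioi _ _ (abs_pos.2 h), mul_zero, smul_eq_mul,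
    ← mul_assoc, ← mul_inv, ← pow_succ]

noncomputable def jeffreysIntegral (lam : ℝ) : ℝ :=
  ∫ x in Ioi 0, logisticKernel x * (1 / cosh (lam * x / 2)) ^ 2

theorem logisticKernel_mul_one_div_cosh_sq_le (lam x : ℝ) :
    logisticKernel x * (1 / cosh (lam * x / 2)) ^ 2 ≤ logisticKernel x :=
  mul_le_of_le_one_right (logisticKernel_nonneg x)
    (pow_le_one₀ (by positivity) (one_div_cosh_le_one _))

theorem continuous_jeffreysIntegral : Continuous jeffreysIntegral := by
  refine continuous_of_dominated (fun lam ↦ ?_) (fun lam ↦ .of_forall fun x ↦ ?_)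
    integrableOn_logisticKernel (.of_forall fun x ↦ ?_)
  · exact (continuous_logisticKernel.mul
      (by fun_prop (disch := exact fun _ ↦ (cosh_pos _).ne'))).aestronglyMeasurable
  · rw [Real.norm_of_nonneg (by have := logisticKernel_nonneg x; positivity)]
    exact logisticKernel_mul_one_div_cosh_sq_le lam x
  · fun_prop (disch := exact fun _ ↦ (cosh_pos _).ne')

theorem jeffreysIntegral_le (lam : ℝ) : jeffreysIntegral lam ≤ ∫ x in Ioi 0, logisticKernel x :=
  integral_mono_of_nonneg (.of_forall fun x ↦ by have := logisticKernel_nonneg x; positivity)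
    integrableOn_logisticKernel (.of_forall (logisticKernel_mul_one_div_cosh_sq_le lam))

theorem jeffreysIntegral_le_inv_abs_pow {lam : ℝ} (h : lam ≠ 0) :
    jeffreysIntegral lam ≤ (|lam| ^ 3)⁻¹ * ∫ x in Ioi 0, logisticKernel x := by
  rw [← integral_sq_mul_one_div_cosh_sq h]
  refine integral_mono_of_nonneg
    (.of_forall fun x ↦ by have := logisticKernel_nonneg x; positivity)
    (integrableOn_sq_mul_one_div_cosh_sq h) (.of_forall fun x ↦ ?_)
  exact mul_le_mul_of_nonneg_right (mul_le_of_le_one_right (sq_nonneg x)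
    (pow_le_one₀ (by positivity) (one_div_cosh_le_one _))) (by positivity)

theorem jeffreysIntegral_le_mul_sq_one_add_abs_rpow (lam : ℝ) :
    jeffreysIntegral lam
      ≤ (8 * ∫ x in Ioi 0, logisticKernel x) * ((1 + |lam|) ^ (-(3 / 2 : ℝ))) ^ 2 := by
  set C := ∫ x in Ioi 0, logisticKernel x
  have hC : 0 ≤ C := integral_nonneg logisticKernel_nonneg
  have hpow : ((1 + |lam|) ^ (-(3 / 2 : ℝ))) ^ 2 = ((1 + |lam|) ^ 3)⁻¹ := by
    rw [← rpow_natCast, ← rpow_mul (by positivity),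
      show -(3 / 2 : ℝ) * (2 : ℕ) = -(3 : ℕ) by norm_num, rpow_neg (by positivity), rpow_natCast]
  rw [hpow, ← div_eq_mul_inv]
  rcases le_or_gt |lam| 1 with hsmall | hlarge
  · calc jeffreysIntegral lam ≤ C := jeffreysIntegral_le lam
      _ = 8 * C / 2 ^ 3 := by ring
      _ ≤ 8 * C / (1 + |lam|) ^ 3 := by gcongr; linarith
  · have hlam : lam ≠ 0 := abs_pos.1 (by linarith)
    calc jeffreysIntegral lam ≤ (|lam| ^ 3)⁻¹ * C := jeffreysIntegral_le_inv_abs_pow hlam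
      _ = 8 * C / (2 * |lam|) ^ 3 := by field_simp; ring
      _ ≤ 8 * C / (1 + |lam|) ^ 3 := by gcongr; linarith

/-- the (unnormalized) Jeffreys prior of the skewness parameter
of the skew-logistic model,
λ ↦ √(∫_0^∞ x² sech²(x/2) sech²(λx/2) dx), is integrable over ℝ. -/
theorem skew_logistic_jeffreys_integrable :
    Integrable (fun lam : ℝ =>
      Real.sqrt (∫ x in Ioi (0:ℝ),
        x^2 * (1 / Real.cosh (x/2))^2 * (1 / Real.cosh (lam * x/2))^2)) :=
  integrable_sqrt_of_le_mul_sq_one_add_norm_rpow (r := 3 / 2)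
    continuous_jeffreysIntegral.aestronglyMeasurable (by norm_num)
    jeffreysIntegral_le_mul_sq_one_add_abs_rpow
end

section
/- For any probability density f on ℝ symmetric about 0 and any CDF G, the skew-symmetric function s(y;λ) = 2 f(y) G(λ y) is itself a probability density on ℝ for every λ ∈ ℝ, i.e., s ≥ 0 and ∫_ℝ 2 f(y) G(λ y) dy = 1. -/
open MeasureTheory Set

theorem integral_mul_eq_half_integral_of_neg_eq_one_sub {E : Type*} [MeasurableSpace E]
    [AddGroup E] [MeasurableNeg E] {μ : Measure E} [μ.IsNegInvariant] {f g : E → ℝ}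
    (hf_even : ∀ x, f (-x) = f x) (hg : ∀ x, g (-x) = 1 - g x)
    (hf : Integrable f μ) (hfg : Integrable (fun x => f x * g x) μ) :
    ∫ x, f x * g x ∂μ = (∫ x, f x ∂μ) / 2 := by
  have hreflect : ∫ x, f x * g x ∂μ = ∫ x, f x * (1 - g x) ∂μ := by
    rw [← integral_neg_eq_self]
    simp only [hf_even, hg]
  have hcompl : ∫ x, f x * (1 - g x) ∂μ = ∫ x, f x ∂μ - ∫ x, f x * g x ∂μ := by
    simp only [mul_sub, mul_one]
    exact integral_sub hf hfg
  linarith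

theorem skew_symmetric_is_density_general
    (f G : ℝ → ℝ)
    (hf_nonneg : ∀ y, 0 ≤ f y)
    (hf_symm : ∀ y, f (-y) = f y) (hf_int : ∫ y, f y = 1)
    (hf_integrable : Integrable f)
    (hG_cont : Continuous G) (hG01 : ∀ t, G t ∈ Icc (0:ℝ) 1)
    (hG_symm : ∀ t, G (-t) = 1 - G t) :
    ∀ lam : ℝ,
      (∀ y, 0 ≤ 2 * f y * G (lam * y)) ∧
      ∫ y, 2 * f y * G (lam * y) = 1 := by
  intro lam
  have hG_norm : ∀ t, ‖G t‖ ≤ 1 := fun t => abs_le.2 ⟨by linarith [(hG01 t).1], (hG01 t).2⟩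
  have hint : Integrable (fun y => f y * G (lam * y)) :=
    hf_integrable.mul_bdd (by fun_prop : Continuous fun y => G (lam * y)).aestronglyMeasurable
      (.of_forall fun y => hG_norm (lam * y))
  have hG_lam_symm : ∀ y, G (lam * -y) = 1 - G (lam * y) := fun y => by rw [mul_neg, hG_symm]
  refine ⟨fun y => mul_nonneg (mul_nonneg zero_le_two (hf_nonneg y)) (hG01 _).1, ?_⟩
  calc ∫ y, 2 * f y * G (lam * y) = 2 * ∫ y, f y * G (lam * y) := by
        simp_rw [mul_assoc]; exact integral_const_mul _ _
    _ = 1 := by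
        rw [integral_mul_eq_half_integral_of_neg_eq_one_sub hf_symm hG_lam_symm hf_integrable hint,
          hf_int]
        norm_num

/-- for f a symmetric density and G a continuous CDF with
G(-t) = 1 - G(t), the function s(y;λ) = 2 f(y) G(λy) is a probability density
for every λ. -/
theorem skew_symmetric_is_density
    (f G : ℝ → ℝ)
    (hf_meas : Measurable f) (hf_nonneg : ∀ y, 0 ≤ f y)
    (hf_symm : ∀ y, f (-y) = f y) (hf_int : ∫ y, f y = 1)
    (hf_integrable : Integrable f)
    (hG_cont : Continuous G) (hG01 : ∀ t, G t ∈ Icc (0:ℝ) 1)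
    (hG_symm : ∀ t, G (-t) = 1 - G t) :
    ∀ lam : ℝ,
      (∀ y, 0 ≤ 2 * f y * G (lam * y)) ∧
      ∫ y, 2 * f y * G (lam * y) = 1 :=
  skew_symmetric_is_density_general f G hf_nonneg hf_symm hf_int hf_integrable hG_cont hG01 hG_symm
end
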